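/- arXiv:2004.12925 — 5 statements merged into one kernel-verified Lean document; each statement's English description precedes it below -/
import Mathlib

section
/- Let c, z, m, k be positive integers, ε ≥ 0 a real number, d_u and τ_u natural numbers for u = 1,…,c with n_1 = 2·d_1 + 2z − 1 and n_u = 2·d_u + z − 1 for u ≥ 2. Assume Σ_{u=1}^{c} d_u·τ_u = m·k·(1+ε) (as real numbers) and that there are reals γ_{u,c} ≥ 1 with τ_u = γ_{u,c}·τ_c for all u. Then N = Σ_{u=1}^{c} n_u·τ_u = 2·m·k·(1+ε) + (z−1)·τ_c·Σ_{u=1}^{c} γ_{u,c} + z·τ_c·γ_{1,c}; consequently the download rate ρ = mk/N equals mk / (2mk(1+ε) + (z−1)·τ_c·Σ_{u=1}^{c} γ_{u,c} + z·τ_c·γ_{1,c}). -/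
/-- Lemma 1 (rate of RPM3): under proportional cluster speeds `τ u = γ u · τ c`
with `γ u ≥ 1`, and Fountain decoding condition `∑ d u · τ u = mk(1+ε)`,
the total number of responses is
`N = 2mk(1+ε) + (z−1)·τ c·∑ γ u + z·τ c·γ 1`, and hence the download rate
`ρ = mk / N` equals `mk / (2mk(1+ε) + (z−1)·τ c·∑ γ u + z·τ c·γ 1)`. -/
theorem rpm3_rate (c z m k : ℕ) (hc : 1 ≤ c) (hz : 1 ≤ z) (hm : 1 ≤ m) (hk : 1 ≤ k)
    (ε : ℝ) (hε : 0 ≤ ε) (d τ n : ℕ → ℕ) (γ : ℕ → ℝ)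
    (hn1 : n 1 = 2 * d 1 + 2 * z - 1)
    (hnu : ∀ u ∈ Finset.Icc 2 c, n u = 2 * d u + z - 1)
    (hdec : ∑ u ∈ Finset.Icc 1 c, (d u : ℝ) * (τ u : ℝ) = (m : ℝ) * k * (1 + ε))
    (hγ : ∀ u ∈ Finset.Icc 1 c, 1 ≤ γ u ∧ (τ u : ℝ) = γ u * (τ c : ℝ)) :
    (∑ u ∈ Finset.Icc 1 c, (n u : ℝ) * (τ u : ℝ)
        = 2 * m * k * (1 + ε)
          + ((z : ℝ) - 1) * (τ c : ℝ) * (∑ u ∈ Finset.Icc 1 c, γ u)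
          + (z : ℝ) * (τ c : ℝ) * γ 1) ∧
    ((m : ℝ) * k) / (∑ u ∈ Finset.Icc 1 c, (n u : ℝ) * (τ u : ℝ))
        = ((m : ℝ) * k) /
          (2 * m * k * (1 + ε)
            + ((z : ℝ) - 1) * (τ c : ℝ) * (∑ u ∈ Finset.Icc 1 c, γ u)
            + (z : ℝ) * (τ c : ℝ) * γ 1) := by
  have hins : Finset.Icc 1 c = insert 1 (Finset.Icc 2 c) := by
    ext x; simp only [Finset.mem_Icc, Finset.mem_insert]; omega
  have h1mem : (1 : ℕ) ∈ Finset.Icc 1 c := by simp [hc]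
  have h1not : (1 : ℕ) ∉ Finset.Icc 2 c := by simp
  -- cast of n 1
  have hn1' : (n 1 : ℝ) = 2 * (d 1 : ℝ) + 2 * z - 1 := by
    have h : 1 ≤ 2 * d 1 + 2 * z := by omega
    rw [hn1]; push_cast [Nat.cast_sub h]; ring
  have hγ1 := hγ 1 h1mem
  have hγc : ∀ u ∈ Finset.Icc 2 c, (τ u : ℝ) = γ u * (τ c : ℝ) := by
    intro u hu
    exact (hγ u (by simp only [Finset.mem_Icc] at hu ⊢; omega)).2
  have key : ∑ u ∈ Finset.Icc 1 c, (n u : ℝ) * (τ u : ℝ)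
      = 2 * (∑ u ∈ Finset.Icc 1 c, (d u : ℝ) * (τ u : ℝ))
        + ((z : ℝ) - 1) * (τ c : ℝ) * (∑ u ∈ Finset.Icc 1 c, γ u)
        + (z : ℝ) * (τ c : ℝ) * γ 1 := by
    rw [hins, Finset.sum_insert h1not, Finset.sum_insert h1not,
      Finset.sum_insert h1not]
    have hrest : ∑ u ∈ Finset.Icc 2 c, (n u : ℝ) * (τ u : ℝ)
        = ∑ u ∈ Finset.Icc 2 c,
            (2 * ((d u : ℝ) * (τ u : ℝ)) + ((z : ℝ) - 1) * (τ c : ℝ) * γ u) := by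
      refine Finset.sum_congr rfl fun u hu => ?_
      have hle : 1 ≤ 2 * d u + z := by omega
      have hnc : (n u : ℝ) = 2 * (d u : ℝ) + z - 1 := by
        rw [hnu u hu]; push_cast [Nat.cast_sub hle]; ring
      rw [hnc, hγc u hu]; ring
    rw [hrest, Finset.sum_add_distrib, ← Finset.mul_sum, ← Finset.mul_sum]
    rw [hn1', hγ1.2]
    ring
  have hτc : (τ 1 : ℝ) = γ 1 * (τ c : ℝ) := hγ1.2
  constructor
  · rw [key, hdec]; ring
  · rw [key, hdec]; ring_nf
end

section
/- Let F be a field, d, z ≥ 1, α_1,…,α_{d+z} ∈ F pairwise distinct with Lagrange basis ℓ_δ, and let β_1,…,β_{2(d+z)−1} ∈ F be pairwise distinct. Suppose (R_δ, S_δ, Ã_κ, B̃_κ) and (R'_δ, S'_δ, Ã'_κ, B̃'_κ) are two tuples of matrices (R, R', Ã, Ã' of size r×s; S, S', B̃, B̃' of size s×ℓ) defining f, g and f', g' as the Lagrange-form polynomials f(x) = Σ_{δ=1}^{z} ℓ_δ(x)•R_δ + Σ_{δ=z+1}^{d+z} ℓ_δ(x)•Ã_{δ−z}, and analogously for g, f',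 g'. If f(β_i)·g(β_i) = f'(β_i)·g'(β_i) for all i = 1,…,2(d+z)−1, then f(x)·g(x) = f'(x)·g'(x) for every x ∈ F; in particular R_ζ·S_ζ = R'_ζ·S'_ζ for all ζ ∈ {1,…,z} and Ã_κ·B̃_κ = Ã'_κ·B̃'_κ for all κ ∈ {1,…,d}. -/
open Polynomial Finset

section Aux

variable {F : Type*} [Field F]

/-- Lagrange basis polynomial. -/
noncomputable def rpmLp {n : ℕ} (α : Fin n → F) (δ : Fin n) : F[X] :=
  ∏ ν ∈ Finset.univ.erase δ, (Polynomial.C ((α δ - α ν)⁻¹) * (Polynomial.X - Polynomial.C (α ν)))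

lemma rpmLp_eval {n : ℕ} (α : Fin n → F) (δ : Fin n) (x : F) :
    (rpmLp α δ).eval x = ∏ ν ∈ Finset.univ.erase δ, (x - α ν) / (α δ - α ν) := by
  rw [rpmLp, Polynomial.eval_prod]
  refine Finset.prod_congr rfl fun ν _ => ?_
  simp [div_eq_mul_inv, mul_comm]

lemma rpmLp_natDegree_le {n : ℕ} (α : Fin n → F) (δ : Fin n) :
    (rpmLp α δ).natDegree ≤ n - 1 := by
  refine le_trans (Polynomial.natDegree_prod_le _ _) ?_
  calc ∑ ν ∈ Finset.univ.erase δ,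
        (Polynomial.C ((α δ - α ν)⁻¹) * (Polynomial.X - Polynomial.C (α ν))).natDegree
      ≤ ∑ ν ∈ Finset.univ.erase δ, 1 := by
        refine Finset.sum_le_sum fun ν _ => ?_
        refine le_trans (Polynomial.natDegree_mul_le) ?_
        simp [Polynomial.natDegree_X_sub_C]
    _ = n - 1 := by simp [Finset.card_erase_of_mem]

end Aux

/-- Decodability for cluster 1 of RPM3: if two RPM3 Lagrange-form parameter
tuples produce the same products `f(β_i)·g(β_i)` at `2(d+z)−1` pairwise
distinct points `β_i`, then `f(x)·g(x) = f'(x)·g'(x)` for every `x`; in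
particular the padded products `R_ζ·S_ζ` and the Fountain-coded products
`Ã_κ·B̃_κ` coincide. -/
theorem rpm3_cluster_one_decodability {F : Type*} [Field F] (r s l d z : ℕ)
    (hd : 1 ≤ d) (hz : 1 ≤ z)
    (α : Fin (z + d) → F) (hα : Function.Injective α)
    (L : Fin (z + d) → F → F)
    (hL : ∀ δ x, L δ x = ∏ ν ∈ Finset.univ.erase δ, (x - α ν) / (α δ - α ν))
    (β : Fin (2 * (d + z) - 1) → F) (hβ : Function.Injective β)
    (R R' : Fin z → Matrix (Fin r) (Fin s) F)
    (Atil Atil' : Fin d → Matrix (Fin r) (Fin s) F)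
    (S S' : Fin z → Matrix (Fin s) (Fin l) F)
    (Btil Btil' : Fin d → Matrix (Fin s) (Fin l) F)
    (f f' : F → Matrix (Fin r) (Fin s) F) (g g' : F → Matrix (Fin s) (Fin l) F)
    (hf : ∀ x, f x = ∑ δ : Fin z, L (Fin.castAdd d δ) x • R δ
        + ∑ κ : Fin d, L (Fin.natAdd z κ) x • Atil κ)
    (hg : ∀ x, g x = ∑ δ : Fin z, L (Fin.castAdd d δ) x • S δ
        + ∑ κ : Fin d, L (Fin.natAdd z κ) x • Btil κ)
    (hf' : ∀ x, f' x = ∑ δ : Fin z, L (Fin.castAdd d δ) x • R' δ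
        + ∑ κ : Fin d, L (Fin.natAdd z κ) x • Atil' κ)
    (hg' : ∀ x, g' x = ∑ δ : Fin z, L (Fin.castAdd d δ) x • S' δ
        + ∑ κ : Fin d, L (Fin.natAdd z κ) x • Btil' κ)
    (heval : ∀ i, f (β i) * g (β i) = f' (β i) * g' (β i)) :
    (∀ x : F, f x * g x = f' x * g' x) ∧
    (∀ ζ : Fin z, R ζ * S ζ = R' ζ * S' ζ) ∧
    (∀ κ : Fin d, Atil κ * Btil κ = Atil' κ * Btil' κ) := by
  classical
  -- polynomial entry representations
  have hLeval : ∀ δ x, (rpmLp α δ).eval x = L δ x := fun δ x => by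
    rw [rpmLp_eval, hL]
  -- abstract polynomial builder for entries
  let P : ∀ (M : Fin z → F) (N : Fin d → F), F[X] := fun M N =>
    ∑ δ : Fin z, Polynomial.C (M δ) * rpmLp α (Fin.castAdd d δ)
      + ∑ κ : Fin d, Polynomial.C (N κ) * rpmLp α (Fin.natAdd z κ)
  have hPdeg : ∀ M N, (P M N).natDegree ≤ (z + d) - 1 := by
    intro M N
    refine le_trans (Polynomial.natDegree_add_le _ _) ?_
    refine max_le ?_ ?_ <;>
    · refine Polynomial.natDegree_sum_le_of_forall_le _ _ fun i _ => ?_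
      refine le_trans (Polynomial.natDegree_mul_le) ?_
      simpa using rpmLp_natDegree_le α _
  have hPeval : ∀ M N x, (P M N).eval x
      = ∑ δ : Fin z, L (Fin.castAdd d δ) x * M δ
        + ∑ κ : Fin d, L (Fin.natAdd z κ) x * N κ := by
    intro M N x
    simp only [P, Polynomial.eval_add, Polynomial.eval_finset_sum, Polynomial.eval_mul,
      Polynomial.eval_C, hLeval]
    congr 1 <;> exact Finset.sum_congr rfl fun _ _ => mul_comm _ _
  -- entrywise polynomials for f, g, f', g'
  have hfent : ∀ x i k, f x i k = (P (fun δ => R δ i k) (fun κ => Atil κ i k)).eval x := by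
    intro x i k; rw [hf, hPeval]; simp [Matrix.sum_apply]
  have hgent : ∀ x k j, g x k j = (P (fun δ => S δ k j) (fun κ => Btil κ k j)).eval x := by
    intro x k j; rw [hg, hPeval]; simp [Matrix.sum_apply]
  have hf'ent : ∀ x i k, f' x i k = (P (fun δ => R' δ i k) (fun κ => Atil' κ i k)).eval x := by
    intro x i k; rw [hf', hPeval]; simp [Matrix.sum_apply]
  have hg'ent : ∀ x k j, g' x k j = (P (fun δ => S' δ k j) (fun κ => Btil' κ k j)).eval x := by
    intro x k j; rw [hg', hPeval]; simp [Matrix.sum_apply]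
  -- the difference polynomial for each entry (i, j)
  have main : ∀ x : F, f x * g x = f' x * g' x := by
    intro x
    ext i j
    let Q : F[X] :=
      (∑ k : Fin s, P (fun δ => R δ i k) (fun κ => Atil κ i k)
          * P (fun δ => S δ k j) (fun κ => Btil κ k j))
        - (∑ k : Fin s, P (fun δ => R' δ i k) (fun κ => Atil' κ i k)
          * P (fun δ => S' δ k j) (fun κ => Btil' κ k j))
    have hQeval : ∀ y : F, Q.eval y = (f y * g y) i j - (f' y * g' y) i j := by
      intro y
      simp only [Q, Polynomial.eval_sub, Polynomial.eval_finset_sum, Polynomial.eval_mul,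
        Matrix.mul_apply, hfent, hgent, hf'ent, hg'ent]
    have hQdeg : Q.natDegree ≤ 2 * (z + d) - 2 := by
      refine le_trans (Polynomial.natDegree_sub_le _ _) (max_le ?_ ?_) <;>
      · refine Polynomial.natDegree_sum_le_of_forall_le _ _ fun k _ => ?_
        refine le_trans (Polynomial.natDegree_mul_le) ?_
        have h1 := hPdeg (fun δ => R δ i k) (fun κ => Atil κ i k)
        have := hPdeg (fun δ => S δ k j) (fun κ => Btil κ k j)
        have := hPdeg (fun δ => R' δ i k) (fun κ => Atil' κ i k)
        have := hPdeg (fun δ => S' δ k j) (fun κ => Btil' κ k j)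
        omega
    have hQ0 : Q = 0 := by
      refine Polynomial.eq_zero_of_natDegree_lt_card_of_eval_eq_zero Q hβ (fun i' => ?_) ?_
      · rw [hQeval, heval i', sub_self]
      · rw [Fintype.card_fin]
        omega
    have h0 := hQeval x
    rw [hQ0, Polynomial.eval_zero] at h0
    exact sub_eq_zero.mp h0.symm
  have hLnode : ∀ δ μ : Fin (z + d), L δ (α μ) = if δ = μ then 1 else 0 := by
    intro δ μ
    rw [hL]
    by_cases h : δ = μ
    · subst h
      rw [if_pos rfl]
      refine Finset.prod_eq_one fun ν hν => ?_
      have : α δ - α ν ≠ 0 := sub_ne_zero.mpr (fun hc => (Finset.mem_erase.mp hν).1 (hα hc).symm)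
      exact div_self this
    · rw [if_neg h]
      refine Finset.prod_eq_zero
        (Finset.mem_erase.mpr ⟨fun hc => h hc.symm, Finset.mem_univ μ⟩) ?_
      simp
  have hnodeCast : ∀ (m p : ℕ) (MM : Fin z → Matrix (Fin m) (Fin p) F)
      (NN : Fin d → Matrix (Fin m) (Fin p) F) (ζ : Fin z),
      (∑ δ : Fin z, L (Fin.castAdd d δ) (α (Fin.castAdd d ζ)) • MM δ
        + ∑ κ : Fin d, L (Fin.natAdd z κ) (α (Fin.castAdd d ζ)) • NN κ) = MM ζ := by
    intro m p MM NN ζ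
    rw [Finset.sum_eq_single ζ, Finset.sum_eq_zero, add_zero]
    · simp [hLnode]
    · intro κ _
      have hne : Fin.natAdd z κ ≠ Fin.castAdd d ζ := by
        intro hc
        have hv := congrArg Fin.val hc
        have := ζ.isLt
        simp only [Fin.coe_natAdd, Fin.coe_castAdd] at hv
        omega
      simp [hLnode, hne]
    · intro δ _ hδ
      have hne : Fin.castAdd d δ ≠ Fin.castAdd d ζ :=
        fun hc => hδ (Fin.castAdd_injective _ _ hc)
      simp [hLnode, hne]
    · simp
  have hnodeNat : ∀ (m p : ℕ) (MM : Fin z → Matrix (Fin m) (Fin p) F)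
      (NN : Fin d → Matrix (Fin m) (Fin p) F) (κ : Fin d),
      (∑ δ : Fin z, L (Fin.castAdd d δ) (α (Fin.natAdd z κ)) • MM δ
        + ∑ κ' : Fin d, L (Fin.natAdd z κ') (α (Fin.natAdd z κ)) • NN κ') = NN κ := by
    intro m p MM NN κ
    rw [Finset.sum_eq_zero, Finset.sum_eq_single κ, zero_add]
    · simp [hLnode]
    · intro κ' _ hκ'
      have hne : Fin.natAdd z κ' ≠ Fin.natAdd z κ := by
        intro hc
        have hv := congrArg Fin.val hc
        simp only [Fin.coe_natAdd, add_right_inj] at hv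
        exact hκ' (Fin.ext hv)
      simp [hLnode, hne]
    · simp
    · intro δ _
      have hne : Fin.castAdd d δ ≠ Fin.natAdd z κ := by
        intro hc
        have hv := congrArg Fin.val hc
        have := δ.isLt
        simp only [Fin.coe_natAdd, Fin.coe_castAdd] at hv
        omega
      simp [hLnode, hne]
  refine ⟨main, fun ζ => ?_, fun κ => ?_⟩
  · have := main (α (Fin.castAdd d ζ))
    rwa [hf, hg, hf', hg', hnodeCast, hnodeCast, hnodeCast, hnodeCast] at this
  · have := main (α (Fin.natAdd z κ))
    rwa [hf, hg, hf', hg', hnodeNat, hnodeNat, hnodeNat, hnodeNat] at this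
end

section
/- Let F be a field, d, z ≥ 1, α_1,…,α_{d+z} ∈ F pairwise distinct with Lagrange basis ℓ_δ, and let β_1,…,β_{2d+z−1} ∈ F be pairwise distinct elements, none of which equals any α_ζ for ζ ∈ {1,…,z}. Suppose two parameter tuples define f, g and f', g' as in the RPM3 Lagrange form (first z coefficients R_δ resp. S_δ, remaining d coefficients Ã_κ resp. B̃_κ). If f(β_i)·g(β_i) = f'(β_i)·g'(β_i) for all i = 1,…,2d+z−1, and additionally R_ζ·S_ζ = R'_ζ·S'_ζ for all ζ ∈ {1,…,z}, then Ã_κ·B̃_κ = Ã'_κ·B̃'_κ for all κ ∈ {1,…,d}. -/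
open Polynomial Finset Fin

/-- Decodability for clusters `u ≥ 2` of RPM3: with `2d+z−1` pairwise distinct
evaluation points `β_i`, none equal to any of the first `z` nodes `α_ζ`, if two
RPM3 Lagrange-form parameter tuples produce the same products `f(β_i)·g(β_i)`
and moreover the padded products coincide (`R_ζ·S_ζ = R'_ζ·S'_ζ` for all
`ζ ∈ [z]`, known to the master from cluster 1), then the Fountain-coded
products coincide: `Ã_κ·B̃_κ = Ã'_κ·B̃'_κ` for all `κ ∈ [d]`. -/
theorem rpm3_cluster_u_decodability {F : Type*} [Field F] (r s l d z : ℕ)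
    (hd : 1 ≤ d) (hz : 1 ≤ z)
    (α : Fin (z + d) → F) (hα : Function.Injective α)
    (L : Fin (z + d) → F → F)
    (hL : ∀ δ x, L δ x = ∏ ν ∈ Finset.univ.erase δ, (x - α ν) / (α δ - α ν))
    (β : Fin (2 * d + z - 1) → F) (hβ : Function.Injective β)
    (hβα : ∀ i, ∀ ζ : Fin z, β i ≠ α (Fin.castAdd d ζ))
    (R R' : Fin z → Matrix (Fin r) (Fin s) F)
    (Atil Atil' : Fin d → Matrix (Fin r) (Fin s) F)
    (S S' : Fin z → Matrix (Fin s) (Fin l) F)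
    (Btil Btil' : Fin d → Matrix (Fin s) (Fin l) F)
    (f f' : F → Matrix (Fin r) (Fin s) F) (g g' : F → Matrix (Fin s) (Fin l) F)
    (hf : ∀ x, f x = ∑ δ : Fin z, L (Fin.castAdd d δ) x • R δ
        + ∑ κ : Fin d, L (Fin.natAdd z κ) x • Atil κ)
    (hg : ∀ x, g x = ∑ δ : Fin z, L (Fin.castAdd d δ) x • S δ
        + ∑ κ : Fin d, L (Fin.natAdd z κ) x • Btil κ)
    (hf' : ∀ x, f' x = ∑ δ : Fin z, L (Fin.castAdd d δ) x • R' δ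
        + ∑ κ : Fin d, L (Fin.natAdd z κ) x • Atil' κ)
    (hg' : ∀ x, g' x = ∑ δ : Fin z, L (Fin.castAdd d δ) x • S' δ
        + ∑ κ : Fin d, L (Fin.natAdd z κ) x • Btil' κ)
    (heval : ∀ i, f (β i) * g (β i) = f' (β i) * g' (β i))
    (hRS : ∀ ζ : Fin z, R ζ * S ζ = R' ζ * S' ζ) :
    ∀ κ : Fin d, Atil κ * Btil κ = Atil' κ * Btil' κ := by
  classical
  have hαinj : Set.InjOn α ↑(Finset.univ : Finset (Fin (z + d))) := hα.injOn
  -- L agrees with evaluation of the mathlib Lagrange basis polynomial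
  have hLeval : ∀ δ x, L δ x = (Lagrange.basis Finset.univ α δ).eval x := by
    intro δ x
    rw [hL, Lagrange.basis, Polynomial.eval_prod]
    refine Finset.prod_congr rfl fun ν _ => ?_
    simp [Lagrange.basisDivisor, div_eq_inv_mul]
  -- values of L at the nodes
  have hLnode : ∀ δ ν : Fin (z + d), L δ (α ν) = if ν = δ then 1 else 0 := by
    intro δ ν
    rw [hLeval]
    by_cases h : ν = δ
    · subst h; rw [if_pos rfl, Lagrange.eval_basis_self hαinj (Finset.mem_univ ν)]
    · rw [if_neg h, Lagrange.eval_basis_of_ne (fun hh => h hh.symm) (Finset.mem_univ ν)]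
  have hcastne : ∀ (ζ : Fin z) (κ : Fin d),
      (Fin.castAdd d ζ : Fin (z + d)) ≠ Fin.natAdd z κ := by
    intro ζ κ h
    have := congrArg Fin.val h
    simp only [Fin.coe_castAdd, Fin.coe_natAdd] at this
    omega
  -- evaluation of the Lagrange combination at the nodes (generic over matrix sizes)
  have keyC : ∀ (m n : ℕ) (Rc : Fin z → Matrix (Fin m) (Fin n) F)
      (Ac : Fin d → Matrix (Fin m) (Fin n) F) (ζ : Fin z),
      (∑ δ : Fin z, L (Fin.castAdd d δ) (α (Fin.castAdd d ζ)) • Rc δ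
        + ∑ κ : Fin d, L (Fin.natAdd z κ) (α (Fin.castAdd d ζ)) • Ac κ) = Rc ζ := by
    intro m n Rc Ac ζ
    have h1 : ∀ δ : Fin z, L (Fin.castAdd d δ) (α (Fin.castAdd d ζ))
        = if δ = ζ then 1 else 0 := by
      intro δ
      rw [hLnode]
      by_cases h : δ = ζ
      · simp [h]
      · rw [if_neg (fun hh => h (by exact_mod_cast (Fin.castAdd_injective z d) hh.symm)),
          if_neg h]
    have h2 : ∀ κ : Fin d, L (Fin.natAdd z κ) (α (Fin.castAdd d ζ)) = 0 := by
      intro κ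
      rw [hLnode, if_neg (hcastne ζ κ)]
    simp only [h1, h2, ite_smul, one_smul, zero_smul]
    rw [Finset.sum_ite_eq' Finset.univ ζ Rc]
    simp
  have keyN : ∀ (m n : ℕ) (Rc : Fin z → Matrix (Fin m) (Fin n) F)
      (Ac : Fin d → Matrix (Fin m) (Fin n) F) (κ : Fin d),
      (∑ δ : Fin z, L (Fin.castAdd d δ) (α (Fin.natAdd z κ)) • Rc δ
        + ∑ κ' : Fin d, L (Fin.natAdd z κ') (α (Fin.natAdd z κ)) • Ac κ') = Ac κ := by
    intro m n Rc Ac κ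
    have h1 : ∀ δ : Fin z, L (Fin.castAdd d δ) (α (Fin.natAdd z κ)) = 0 := by
      intro δ
      rw [hLnode, if_neg (fun h => hcastne δ κ h.symm)]
    have h2 : ∀ κ' : Fin d, L (Fin.natAdd z κ') (α (Fin.natAdd z κ))
        = if κ' = κ then 1 else 0 := by
      intro κ'
      rw [hLnode]
      by_cases h : κ' = κ
      · simp [h]
      · rw [if_neg (fun hh => h (Fin.ext (by
          have := congrArg Fin.val hh
          simp only [Fin.coe_natAdd] at this
          omega))), if_neg h]
    simp only [h1, h2, ite_smul, one_smul, zero_smul]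
    rw [Finset.sum_ite_eq' Finset.univ κ Ac]
    simp
  -- node values of f, g, f', g'
  have hfC : ∀ ζ : Fin z, f (α (Fin.castAdd d ζ)) = R ζ := fun ζ => by
    rw [hf]; exact keyC _ _ _ _ ζ
  have hgC : ∀ ζ : Fin z, g (α (Fin.castAdd d ζ)) = S ζ := fun ζ => by
    rw [hg]; exact keyC _ _ _ _ ζ
  have hf'C : ∀ ζ : Fin z, f' (α (Fin.castAdd d ζ)) = R' ζ := fun ζ => by
    rw [hf']; exact keyC _ _ _ _ ζ
  have hg'C : ∀ ζ : Fin z, g' (α (Fin.castAdd d ζ)) = S' ζ := fun ζ => by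
    rw [hg']; exact keyC _ _ _ _ ζ
  have hfN : ∀ κ : Fin d, f (α (Fin.natAdd z κ)) = Atil κ := fun κ => by
    rw [hf]; exact keyN _ _ _ _ κ
  have hgN : ∀ κ : Fin d, g (α (Fin.natAdd z κ)) = Btil κ := fun κ => by
    rw [hg]; exact keyN _ _ _ _ κ
  have hf'N : ∀ κ : Fin d, f' (α (Fin.natAdd z κ)) = Atil' κ := fun κ => by
    rw [hf']; exact keyN _ _ _ _ κ
  have hg'N : ∀ κ : Fin d, g' (α (Fin.natAdd z κ)) = Btil' κ := fun κ => by
    rw [hg']; exact keyN _ _ _ _ κ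
  -- entrywise polynomials
  set pf : Fin r → Fin s → F[X] := fun i k =>
    ∑ δ : Fin z, C (R δ i k) * Lagrange.basis Finset.univ α (Fin.castAdd d δ)
      + ∑ κ : Fin d, C (Atil κ i k) * Lagrange.basis Finset.univ α (Fin.natAdd z κ) with hpf
  set pg : Fin s → Fin l → F[X] := fun k j =>
    ∑ δ : Fin z, C (S δ k j) * Lagrange.basis Finset.univ α (Fin.castAdd d δ)
      + ∑ κ : Fin d, C (Btil κ k j) * Lagrange.basis Finset.univ α (Fin.natAdd z κ) with hpg
  set pf' : Fin r → Fin s → F[X] := fun i k =>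
    ∑ δ : Fin z, C (R' δ i k) * Lagrange.basis Finset.univ α (Fin.castAdd d δ)
      + ∑ κ : Fin d, C (Atil' κ i k) * Lagrange.basis Finset.univ α (Fin.natAdd z κ) with hpf'
  set pg' : Fin s → Fin l → F[X] := fun k j =>
    ∑ δ : Fin z, C (S' δ k j) * Lagrange.basis Finset.univ α (Fin.castAdd d δ)
      + ∑ κ : Fin d, C (Btil' κ k j) * Lagrange.basis Finset.univ α (Fin.natAdd z κ) with hpg'
  have hbdeg : ∀ δ : Fin (z + d),
      (Lagrange.basis Finset.univ α δ).natDegree ≤ z + d - 1 := by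
    intro δ
    have h := Lagrange.degree_basis hαinj (Finset.mem_univ δ)
    have : (Lagrange.basis Finset.univ α δ).degree ≤ (z + d - 1 : ℕ) := by
      rw [h]; simp
    exact Polynomial.natDegree_le_iff_degree_le.2 this
  have hsumdeg : ∀ {m : ℕ} (c : Fin m → F) (e : Fin m → Fin (z + d)),
      (∑ j : Fin m, C (c j) * Lagrange.basis Finset.univ α (e j)).natDegree
        ≤ z + d - 1 := by
    intro m c e
    refine Polynomial.natDegree_sum_le_of_forall_le _ _ fun j _ => ?_
    calc (C (c j) * Lagrange.basis Finset.univ α (e j)).natDegree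
        ≤ (Lagrange.basis Finset.univ α (e j)).natDegree :=
          Polynomial.natDegree_C_mul_le _ _
      _ ≤ z + d - 1 := hbdeg _
  have hpdeg : ∀ (p : F[X]),
      (p = ∑ δ : Fin z, C (0:F) * Lagrange.basis Finset.univ α (Fin.castAdd d δ)) →
      True := fun _ _ => trivial
  have hdegpf : ∀ i k, (pf i k).natDegree ≤ z + d - 1 := fun i k =>
    le_trans (Polynomial.natDegree_add_le _ _) (max_le (hsumdeg _ _) (hsumdeg _ _))
  have hdegpg : ∀ k j, (pg k j).natDegree ≤ z + d - 1 := fun k j =>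
    le_trans (Polynomial.natDegree_add_le _ _) (max_le (hsumdeg _ _) (hsumdeg _ _))
  have hdegpf' : ∀ i k, (pf' i k).natDegree ≤ z + d - 1 := fun i k =>
    le_trans (Polynomial.natDegree_add_le _ _) (max_le (hsumdeg _ _) (hsumdeg _ _))
  have hdegpg' : ∀ k j, (pg' k j).natDegree ≤ z + d - 1 := fun k j =>
    le_trans (Polynomial.natDegree_add_le _ _) (max_le (hsumdeg _ _) (hsumdeg _ _))
  -- evaluations
  have hevpf : ∀ x i k, (pf i k).eval x = f x i k := by
    intro x i k
    simp [hpf, hf, Polynomial.eval_finset_sum, Matrix.sum_apply, Matrix.smul_apply,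
      smul_eq_mul, hLeval, mul_comm]
  have hevpg : ∀ x k j, (pg k j).eval x = g x k j := by
    intro x k j
    simp [hpg, hg, Polynomial.eval_finset_sum, Matrix.sum_apply, Matrix.smul_apply,
      smul_eq_mul, hLeval, mul_comm]
  have hevpf' : ∀ x i k, (pf' i k).eval x = f' x i k := by
    intro x i k
    simp [hpf', hf', Polynomial.eval_finset_sum, Matrix.sum_apply, Matrix.smul_apply,
      smul_eq_mul, hLeval, mul_comm]
  have hevpg' : ∀ x k j, (pg' k j).eval x = g' x k j := by
    intro x k j
    simp [hpg', hg', Polynomial.eval_finset_sum, Matrix.sum_apply, Matrix.smul_apply,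
      smul_eq_mul, hLeval, mul_comm]
  intro κ
  ext i j
  -- the difference polynomial for entry (i, j)
  set q : F[X] := (∑ k : Fin s, pf i k * pg k j) - ∑ k : Fin s, pf' i k * pg' k j with hq
  have hevq : ∀ x, q.eval x = (f x * g x) i j - (f' x * g' x) i j := by
    intro x
    simp [hq, Polynomial.eval_finset_sum, Matrix.mul_apply, hevpf, hevpg, hevpf', hevpg']
  have hdegq : q.natDegree ≤ 2 * (z + d - 1) := by
    have h1 : (∑ k : Fin s, pf i k * pg k j).natDegree ≤ 2 * (z + d - 1) := by
      refine Polynomial.natDegree_sum_le_of_forall_le _ _ fun k _ => ?_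
      calc (pf i k * pg k j).natDegree ≤ (pf i k).natDegree + (pg k j).natDegree :=
            Polynomial.natDegree_mul_le
        _ ≤ (z + d - 1) + (z + d - 1) := add_le_add (hdegpf i k) (hdegpg k j)
        _ = 2 * (z + d - 1) := by ring
    have h2 : (∑ k : Fin s, pf' i k * pg' k j).natDegree ≤ 2 * (z + d - 1) := by
      refine Polynomial.natDegree_sum_le_of_forall_le _ _ fun k _ => ?_
      calc (pf' i k * pg' k j).natDegree ≤ (pf' i k).natDegree + (pg' k j).natDegree :=
            Polynomial.natDegree_mul_le
        _ ≤ (z + d - 1) + (z + d - 1) := add_le_add (hdegpf' i k) (hdegpg' k j)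
        _ = 2 * (z + d - 1) := by ring
    exact le_trans (Polynomial.natDegree_sub_le _ _) (max_le h1 h2)
  -- the root set
  set pts : Fin (2 * d + z - 1) ⊕ Fin z → F :=
    Sum.elim β (fun ζ => α (Fin.castAdd d ζ)) with hpts
  have hptsinj : Function.Injective pts := by
    rintro (a | a) (b | b) h <;> simp only [hpts, Sum.elim_inl, Sum.elim_inr] at h
    · exact congrArg Sum.inl (hβ h)
    · exact absurd h (hβα a b)
    · exact absurd h.symm (hβα b a)
    · exact congrArg Sum.inr (by
        have := hα h
        exact_mod_cast (Fin.castAdd_injective z d) this)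
  have hq0 : q = 0 := by
    refine Polynomial.eq_zero_of_natDegree_lt_card_of_eval_eq_zero q hptsinj ?_ ?_
    · rintro (a | a)
      · simp only [hpts, Sum.elim_inl]
        rw [hevq, heval a, sub_self]
      · simp only [hpts, Sum.elim_inr]
        rw [hevq, hfC, hgC, hf'C, hg'C, hRS, sub_self]
    · have : Fintype.card (Fin (2 * d + z - 1) ⊕ Fin z) = (2 * d + z - 1) + z := by
        simp
      rw [this]
      have := hdegq
      omega
  have := hevq (α (Fin.natAdd z κ))
  rw [hq0] at this
  simp only [Polynomial.eval_zero] at this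
  rw [hfN, hgN, hf'N, hg'N] at this
  exact sub_eq_zero.mp this.symm
end

section
/- Let F be a field, d ≥ 0, z ≥ 1, α_1,…,α_{d+z} ∈ F pairwise distinct, and ℓ_δ the Lagrange basis polynomials for these nodes. Let β_1,…,β_z ∈ F be pairwise distinct elements with β_i ∉ {α_1,…,α_{d+z}} for all i. Then the z×z matrix M over F with entries M_{i,δ} = ℓ_δ(β_i) (i, δ ∈ {1,…,z}) is invertible. -/
open Polynomial Finset

lemma L_eq_eval_basis {F : Type*} [Field F] {n : ℕ} (α : Fin n → F)
    (L : Fin n → F → F)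
    (hL : ∀ δ x, L δ x = ∏ ν ∈ Finset.univ.erase δ, (x - α ν) / (α δ - α ν))
    (δ : Fin n) (x : F) :
    L δ x = (Lagrange.basis Finset.univ α δ).eval x := by
  rw [hL, Lagrange.basis, eval_prod]
  refine Finset.prod_congr rfl fun ν _ => ?_
  simp [Lagrange.basisDivisor, div_eq_inv_mul, mul_comm]

/-- Algebraic core of the double-sided `z`-privacy proof of RPM3: the `z×z`
matrix `M` with entries `M i δ = ℓ_δ(β_i)`, where `ℓ_δ` are the first `z`
Lagrange basis polynomials for the `d+z` pairwise distinct nodes `α_ν` and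
`β_1, …, β_z` are pairwise distinct points avoiding all nodes, is invertible. -/
theorem rpm3_privacy_matrix_invertible {F : Type*} [Field F] (d z : ℕ) (hz : 1 ≤ z)
    (α : Fin (z + d) → F) (hα : Function.Injective α)
    (L : Fin (z + d) → F → F)
    (hL : ∀ δ x, L δ x = ∏ ν ∈ Finset.univ.erase δ, (x - α ν) / (α δ - α ν))
    (β : Fin z → F) (hβ : Function.Injective β)
    (hβα : ∀ i : Fin z, ∀ ν : Fin (z + d), β i ≠ α ν) :
    IsUnit (Matrix.of fun i δ : Fin z => L (Fin.castAdd d δ) (β i)) := by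
  classical
  have hαinj : Set.InjOn α (Finset.univ : Finset (Fin (z + d))) := hα.injOn
  rw [Matrix.isUnit_iff_isUnit_det, isUnit_iff_ne_zero]
  intro hdet
  obtain ⟨v, hv, hMv⟩ := Matrix.exists_mulVec_eq_zero_iff.mpr hdet
  set p : F[X] := ∑ δ : Fin z, C (v δ) * Lagrange.basis Finset.univ α (Fin.castAdd d δ)
    with hp
  -- evaluation of p
  have hpev : ∀ x : F, p.eval x =
      ∑ δ : Fin z, v δ * (Lagrange.basis Finset.univ α (Fin.castAdd d δ)).eval x := by
    intro x; simp [hp, eval_finset_sum]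
  -- p vanishes at β i
  have hβroot : ∀ i : Fin z, p.eval (β i) = 0 := by
    intro i
    have := congrFun hMv i
    simp only [Matrix.mulVec, dotProduct, Matrix.of_apply, Pi.zero_apply] at this
    rw [hpev]
    rw [← this]
    refine Finset.sum_congr rfl fun δ _ => ?_
    rw [L_eq_eval_basis α L hL, mul_comm]
  -- p vanishes at the last d nodes
  have hαroot : ∀ j : Fin d, p.eval (α (Fin.natAdd z j)) = 0 := by
    intro j
    rw [hpev]
    refine Finset.sum_eq_zero fun δ _ => ?_
    have hne : Fin.castAdd d δ ≠ Fin.natAdd z j := by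
      intro h
      have := congrArg Fin.val h
      simp only [Fin.coe_castAdd, Fin.coe_natAdd] at this
      omega
    rw [Lagrange.eval_basis_of_ne hne (Finset.mem_univ _), mul_zero]
  -- the z + d roots
  have hcard0 : 0 < z + d := by omega
  have hdeg : p.natDegree < z + d := by
    refine lt_of_le_of_lt (Polynomial.natDegree_sum_le _ _) ?_
    rw [Finset.fold_max_lt]
    constructor
    · exact hcard0
    · intro δ _
      refine lt_of_le_of_lt (natDegree_C_mul_le _ _) ?_
      rw [Lagrange.natDegree_basis hαinj (Finset.mem_univ _)]
      simp only [Finset.card_univ, Fintype.card_fin]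
      omega
  have hpzero : p = 0 := by
    refine Polynomial.eq_zero_of_natDegree_lt_card_of_eval_eq_zero p
      (f := Sum.elim β (fun j : Fin d => α (Fin.natAdd z j))) ?_ ?_ ?_
    · rintro (i | i) (j | j) h <;> simp only [Sum.elim_inl, Sum.elim_inr] at h
      · exact congrArg Sum.inl (hβ h)
      · exact absurd h (hβα i _)
      · exact absurd h.symm (hβα j _)
      · refine congrArg Sum.inr ?_
        have := hα h
        have := congrArg Fin.val this
        simp only [Fin.coe_natAdd] at this
        exact Fin.ext (by omega)
    · rintro (i | j)
      · exact hβroot i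
      · exact hαroot j
    · simpa using hdeg
  -- conclude v = 0
  apply hv
  funext δ
  have : p.eval (α (Fin.castAdd d δ)) = v δ := by
    rw [hpev]
    rw [Finset.sum_eq_single δ]
    · rw [Lagrange.eval_basis_self hαinj (Finset.mem_univ _), mul_one]
    · intro δ' _ hδ'
      have hne : Fin.castAdd d δ' ≠ Fin.castAdd d δ := fun h => hδ' (Fin.castAdd_injective _ _ h)
      rw [Lagrange.eval_basis_of_ne hne (Finset.mem_univ _), mul_zero]
    · intro h; exact absurd (Finset.mem_univ δ) h
  rw [hpzero] at this
  simpa using this.symm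
end

section
/- Let A, F, K be random variables taking finitely many values on a probability space with H[F | (A, K)] = 0, H[K | A] = H[K], and H[F] = H[K]. Then the mutual information satisfies I[A : F] = H[K | (F, A)]; in particular, I[A : F] = 0 if and only if H[K | (F, A)] = 0. -/
open MeasureTheory

/-- Shannon entropy `H[X]` of a finitely-valued random variable `X` on a
measure space `(Ω, μ)`, via the distribution of `X`. -/
noncomputable def shEntropy {Ω : Type*} [MeasurableSpace Ω] (μ : Measure Ω)
    {S : Type*} [Fintype S] (X : Ω → S) : ℝ :=
  ∑ x : S, Real.negMulLog (μ (X ⁻¹' {x})).toReal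

/-- Conditional Shannon entropy `H[X | Y] = H[(X, Y)] − H[Y]`. -/
noncomputable def shCondEntropy {Ω : Type*} [MeasurableSpace Ω] (μ : Measure Ω)
    {S T : Type*} [Fintype S] [Fintype T] (X : Ω → S) (Y : Ω → T) : ℝ :=
  shEntropy μ (fun ω => (X ω, Y ω)) - shEntropy μ Y

/-- Mutual information `I[X : Y] = H[X] + H[Y] − H[(X, Y)]`. -/
noncomputable def shMutualInfo {Ω : Type*} [MeasurableSpace Ω] (μ : Measure Ω)
    {S T : Type*} [Fintype S] [Fintype T] (X : Ω → S) (Y : Ω → T) : ℝ :=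
  shEntropy μ X + shEntropy μ Y - shEntropy μ (fun ω => (X ω, Y ω))


lemma shEntropy_comp_equiv {Ω : Type*} [MeasurableSpace Ω] (μ : Measure Ω)
    {S T : Type*} [Fintype S] [Fintype T] (e : S ≃ T) (X : Ω → S) :
    shEntropy μ (fun ω => e (X ω)) = shEntropy μ X := by
  unfold shEntropy
  rw [← e.sum_comp]
  refine Finset.sum_congr rfl fun s _ => ?_
  have : (fun ω => e (X ω)) ⁻¹' {e s} = X ⁻¹' {s} := by ext ω; simp
  rw [this]

/-- Appendix of the RPM3 paper: under `H[F | (A,K)] = 0`, `H[K | A] = H[K]`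
and `H[F] = H[K]`, the mutual information satisfies
`I[A : F] = H[K | (F, A)]`; in particular `I[A : F] = 0` iff
`H[K | (F, A)] = 0`. -/
theorem rpm3_privacy_mutual_information {Ω : Type*} [MeasurableSpace Ω]
    (μ : Measure Ω) [IsProbabilityMeasure μ]
    {SA SF SK : Type*} [Fintype SA] [Fintype SF] [Fintype SK]
    [MeasurableSpace SA] [MeasurableSpace SF] [MeasurableSpace SK]
    [MeasurableSingletonClass SA] [MeasurableSingletonClass SF]
    [MeasurableSingletonClass SK]
    (A : Ω → SA) (Fv : Ω → SF) (K : Ω → SK)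
    (hA : Measurable A) (hF : Measurable Fv) (hK : Measurable K)
    (h1 : shCondEntropy μ Fv (fun ω => (A ω, K ω)) = 0)
    (h2 : shCondEntropy μ K A = shEntropy μ K)
    (h3 : shEntropy μ Fv = shEntropy μ K) :
    shMutualInfo μ A Fv = shCondEntropy μ K (fun ω => (Fv ω, A ω)) ∧
    (shMutualInfo μ A Fv = 0 ↔ shCondEntropy μ K (fun ω => (Fv ω, A ω)) = 0) := by
  have e1 : shEntropy μ (fun ω => (A ω, Fv ω)) = shEntropy μ (fun ω => (Fv ω, A ω)) :=
    shEntropy_comp_equiv μ (Equiv.prodComm SF SA) (fun ω => (Fv ω, A ω))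
  have e3 : shEntropy μ (fun ω => (A ω, K ω)) = shEntropy μ (fun ω => (K ω, A ω)) :=
    shEntropy_comp_equiv μ (Equiv.prodComm SK SA) (fun ω => (K ω, A ω))
  have e2 : shEntropy μ (fun ω => (K ω, (Fv ω, A ω))) =
      shEntropy μ (fun ω => (Fv ω, (A ω, K ω))) :=
    shEntropy_comp_equiv μ
      (⟨fun p => (p.2.2, (p.1, p.2.1)), fun q => (q.2.1, (q.2.2, q.1)),
        fun p => rfl, fun q => rfl⟩ : SF × (SA × SK) ≃ SK × (SF × SA))
      (fun ω => (Fv ω, (A ω, K ω)))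
  unfold shMutualInfo shCondEntropy at *
  constructor
  · linarith
  · constructor <;> intro h <;> linarith
end
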